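/- Assume 𝕍 is continuous, T-invariant, and T-ergodic. Then for every P ∈ Θ there exist T-ergodic probability measures P_1, …, P_n ∈ Θ* and weights λ_k ≥ 0 with Σ_{k=1}^n λ_k = 1 such that P(A) = Σ_{k=1}^n λ_k P_k(A) for every A in the invariant σ-algebra 𝓘. -/

import Mathlib

/-!
On invariant sets `V` only takes the values `0` and `1`, and continuity of `V` at `∅` forbids
infinitely many disjoint invariant sets of upper probability one. Hence `Ω` is, up to a `V`-null
set, a finite disjoint union of invariant atoms `B`, each of which every invariant set either
misses or fills up to a `V`-null set. On an atom the value `V B = 1` is attained by some `Q ∈ Θ`,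
and the Krylov–Bogolyubov construction turns `Q` into an invariant `μ ∈ Θ` with `μ B = 1`. Such
a `μ` is ergodic, and every `P ∈ Θ` satisfies `P (B ∩ A) = P B * μ A` for invariant `A`, so the
weights are `P B`. Limits of measures are taken setwise along an ultrafilter; continuity of `V`
makes the limit σ-additive and maximality of `Θ` puts it back in `Θ`.
-/

open MeasureTheory Filter
open scoped ENNReal

section UpperProbability

open Set Topology

variable {Ω : Type*} [MeasurableSpace Ω]

noncomputable def upperProbability (Θ : Set (Measure Ω)) : OuterMeasure Ω :=
  ⨆ P ∈ Θ, P.toOuterMeasure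

lemma upperProbability_apply (Θ : Set (Measure Ω)) (A : Set Ω) :
    upperProbability Θ A = ⨆ P ∈ Θ, P A := by
  simp [upperProbability, OuterMeasure.iSup_apply]

lemma le_upperProbability {Θ : Set (Measure Ω)} {P : Measure Ω} (hP : P ∈ Θ) (A : Set Ω) :
    P A ≤ upperProbability Θ A :=
  (upperProbability_apply Θ A).symm ▸ le_iSup₂ (f := fun (P : Measure Ω) _ => P A) P hP

def IsDominatedBy (P : Measure Ω) (V : Set Ω → ℝ≥0∞) : Prop :=
  ∀ A, MeasurableSet A → P A ≤ V A

def IsContinuousAtEmpty (V : Set Ω → ℝ≥0∞) : Prop :=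
  ∀ A : ℕ → Set Ω, (∀ n, MeasurableSet (A n)) → Antitone A → ⋂ n, A n = ∅ →
    Tendsto (fun n => V (A n)) atTop (𝓝 0)

lemma isSetRing_measurableSet : IsSetRing {A : Set Ω | MeasurableSet A} where
  empty_mem := MeasurableSet.empty
  union_mem _ _ := MeasurableSet.union
  sdiff_mem _ _ := MeasurableSet.diff

/-- Compactness of the dominated probability measures: the setwise limit along an ultrafilter
exists in `[0, ∞]`, and continuity of `V` at `∅` upgrades its finite additivity to σ-additivity. -/
theorem exists_measure_tendsto_ultrafilter {V : Set Ω → ℝ≥0∞} (hcont : IsContinuousAtEmpty V)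
    {ι : Type*} (L : Ultrafilter ι) (μ : ι → Measure Ω) [∀ i, IsProbabilityMeasure (μ i)]
    (hμ : ∀ i, IsDominatedBy (μ i) V) :
    ∃ ν : Measure Ω, IsProbabilityMeasure ν ∧ IsDominatedBy ν V ∧
      ∀ A, MeasurableSet A → Tendsto (fun i => μ i A) L (𝓝 (ν A)) := by
  let m : Set Ω → ℝ≥0∞ := fun A => (L.map fun i => μ i A).lim
  have hm (A : Set Ω) : Tendsto (fun i => μ i A) L (𝓝 (m A)) := Ultrafilter.le_nhds_lim _
  have hm_const {A : Set Ω} {c : ℝ≥0∞} (h : ∀ i, μ i A = c) : m A = c :=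
    tendsto_nhds_unique (hm A) (by simpa only [h] using tendsto_const_nhds)
  have hm_empty : m ∅ = 0 := hm_const fun _ => measure_empty
  have hm_le_one (A : Set Ω) : m A ≤ 1 := le_of_tendsto' (hm A) fun _ => prob_le_one
  have hm_le (A : Set Ω) (hA : MeasurableSet A) : m A ≤ V A :=
    le_of_tendsto' (hm A) fun i => hμ i A hA
  have hm_add {A B : Set Ω} (_ : MeasurableSet A) (hB : MeasurableSet B) (hAB : Disjoint A B) :
      m (A ∪ B) = m A + m B :=
    tendsto_nhds_unique (hm _) (by simpa only [measure_union hAB hB] using (hm A).add (hm B))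
  let content := isSetRing_measurableSet.addContent_of_union m hm_empty hm_add
  have hm_iUnion ⦃f : ℕ → Set Ω⦄ (hf : ∀ i, MeasurableSet (f i))
      (hdisj : Pairwise (Function.onFun Disjoint f)) : m (⋃ i, f i) = ∑' i, m (f i) :=
    addContent_iUnion_eq_sum_of_tendsto_zero isSetRing_measurableSet content
      (fun A _ => ((hm_le_one A).trans_lt ENNReal.one_lt_top).ne)
      (fun s hs hanti hempty => tendsto_of_tendsto_of_tendsto_of_le_of_le tendsto_const_nhds
        (hcont s hs hanti hempty) (fun _ => zero_le) fun n => hm_le _ (hs n))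
      hf (MeasurableSet.iUnion hf) hdisj
  let ν := Measure.ofMeasurable (fun A _ => m A) hm_empty hm_iUnion
  have hν (A : Set Ω) (hA : MeasurableSet A) : ν A = m A := Measure.ofMeasurable_apply A hA
  refine ⟨ν, ⟨?_⟩, fun A hA => (hν A hA).trans_le (hm_le A hA), fun A hA => hν A hA ▸ hm A⟩
  rw [hν _ MeasurableSet.univ]
  exact hm_const fun _ => measure_univ

theorem exists_mem_apply_eq_upperProbability {Θ : Set (Measure Ω)} (hΘ : Θ.Nonempty)
    (hprob : ∀ P ∈ Θ, IsProbabilityMeasure P)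
    (hmax : ∀ P : Measure Ω, IsProbabilityMeasure P → IsDominatedBy P (upperProbability Θ) → P ∈ Θ)
    (hcont : IsContinuousAtEmpty (upperProbability Θ)) {A : Set Ω} (hA : MeasurableSet A) :
    ∃ Q ∈ Θ, Q A = upperProbability Θ A := by
  obtain ⟨u, -, hu, huΘ⟩ :=
    exists_seq_tendsto_sSup (hΘ.image fun P : Measure Ω => P A) (OrderTop.bddAbove _)
  choose P hPΘ hPA using huΘ
  have := fun n => hprob _ (hPΘ n)
  obtain ⟨Q, hQprob, hQdom, hQlim⟩ := exists_measure_tendsto_ultrafilter hcont (hyperfilter ℕ) P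
    fun n B _ => le_upperProbability (hPΘ n) B
  refine ⟨Q, hmax Q hQprob hQdom, tendsto_nhds_unique (hQlim A hA) ?_⟩
  rw [upperProbability_apply, ← sSup_image]
  simpa only [hPA] using hu.mono_left Nat.hyperfilter_le_atTop

variable {T : Ω → Ω}

lemma apply_preimage_iterate {V : Set Ω → ℝ≥0∞} (hT : Measurable T)
    (hVinv : ∀ A, MeasurableSet A → V (T ⁻¹' A) = V A) (k : ℕ) {A : Set Ω}
    (hA : MeasurableSet A) : V (T^[k] ⁻¹' A) = V A := by
  induction k with
  | zero => rfl
  | succ k ih => rw [Function.iterate_succ, preimage_comp, hVinv _ ((hT.iterate k) hA), ih]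

noncomputable def cesaroAverage (T : Ω → Ω) (Q : Measure Ω) (n : ℕ) : Measure Ω :=
  ((n : ℝ≥0∞) + 1)⁻¹ • ∑ k ∈ Finset.range (n + 1), Q.map T^[k]

lemma cesaroAverage_apply (hT : Measurable T) (Q : Measure Ω) (n : ℕ) {A : Set Ω}
    (hA : MeasurableSet A) :
    cesaroAverage T Q n A = ((n : ℝ≥0∞) + 1)⁻¹ * ∑ k ∈ Finset.range (n + 1), Q (T^[k] ⁻¹' A) := by
  simp [cesaroAverage, Measure.finsetSum_apply, Measure.map_apply (hT.iterate _) hA]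

lemma inv_succ_mul_sum_range_const (n : ℕ) (c : ℝ≥0∞) :
    ((n : ℝ≥0∞) + 1)⁻¹ * ∑ _k ∈ Finset.range (n + 1), c = c := by
  rw [Finset.sum_const, Finset.card_range, nsmul_eq_mul, Nat.cast_succ,
    ENNReal.inv_mul_cancel_left (by positivity) (by simp)]

lemma cesaroAverage_apply_of_preimage_eq (hT : Measurable T) (Q : Measure Ω) (n : ℕ)
    {A : Set Ω} (hA : MeasurableSet A) (hAinv : T ⁻¹' A = A) : cesaroAverage T Q n A = Q A := by
  have h (k : ℕ) : T^[k] ⁻¹' A = A := Function.IsFixedPt.preimage_iterate hAinv k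
  simp only [cesaroAverage_apply hT Q n hA, h, inv_succ_mul_sum_range_const]

lemma isProbabilityMeasure_cesaroAverage (hT : Measurable T) (Q : Measure Ω)
    [IsProbabilityMeasure Q] (n : ℕ) : IsProbabilityMeasure (cesaroAverage T Q n) :=
  ⟨by rw [cesaroAverage_apply_of_preimage_eq hT Q n .univ preimage_univ, measure_univ]⟩

lemma isDominatedBy_cesaroAverage {V : Set Ω → ℝ≥0∞} (hT : Measurable T)
    (hVinv : ∀ A, MeasurableSet A → V (T ⁻¹' A) = V A) {Q : Measure Ω} (hQ : IsDominatedBy Q V)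
    (n : ℕ) : IsDominatedBy (cesaroAverage T Q n) V := by
  intro A hA
  calc cesaroAverage T Q n A
      ≤ ((n : ℝ≥0∞) + 1)⁻¹ * ∑ _k ∈ Finset.range (n + 1), V A := by
        rw [cesaroAverage_apply hT Q n hA]
        gcongr with k
        exact (hQ _ ((hT.iterate k) hA)).trans_eq (apply_preimage_iterate hT hVinv k hA)
    _ = V A := inv_succ_mul_sum_range_const n _

lemma cesaroAverage_preimage_add (hT : Measurable T) (Q : Measure Ω) (n : ℕ) {A : Set Ω}
    (hA : MeasurableSet A) :
    cesaroAverage T Q n (T ⁻¹' A) + ((n : ℝ≥0∞) + 1)⁻¹ * Q A =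
      cesaroAverage T Q n A + ((n : ℝ≥0∞) + 1)⁻¹ * Q (T^[n + 1] ⁻¹' A) := by
  rw [cesaroAverage_apply hT Q n (hT hA), cesaroAverage_apply hT Q n hA, ← mul_add, ← mul_add]
  congr 1
  simp only [← preimage_comp, ← Function.iterate_succ']
  exact (Finset.sum_range_succ' (fun k => Q (T^[k] ⁻¹' A)) (n + 1)).symm.trans
    (Finset.sum_range_succ _ _)

lemma tendsto_inv_succ_mul_measure (Q : Measure Ω) [IsProbabilityMeasure Q] (A : ℕ → Set Ω) :
    Tendsto (fun n : ℕ => ((n : ℝ≥0∞) + 1)⁻¹ * Q (A n)) atTop (𝓝 0) := by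
  have h : Tendsto (fun n : ℕ => ((n : ℝ≥0∞) + 1)⁻¹) atTop (𝓝 0) := by
    simpa [Function.comp_def] using ENNReal.tendsto_inv_nat_nhds_zero.comp (tendsto_add_atTop_nat 1)
  exact tendsto_of_tendsto_of_tendsto_of_le_of_le tendsto_const_nhds h (fun _ => zero_le)
    fun n => mul_le_of_le_one_right' prob_le_one

/-- Krylov–Bogolyubov: a limit point of the Cesàro averages of the push-forwards of `Q`. -/
theorem exists_invariant_isDominatedBy {V : Set Ω → ℝ≥0∞} (hT : Measurable T)
    (hcont : IsContinuousAtEmpty V) (hVinv : ∀ A, MeasurableSet A → V (T ⁻¹' A) = V A)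
    (Q : Measure Ω) [IsProbabilityMeasure Q] (hQ : IsDominatedBy Q V) :
    ∃ ν : Measure Ω, IsProbabilityMeasure ν ∧ IsDominatedBy ν V ∧
      (∀ A, MeasurableSet A → ν (T ⁻¹' A) = ν A) ∧
      ∀ A, MeasurableSet A → T ⁻¹' A = A → ν A = Q A := by
  have := isProbabilityMeasure_cesaroAverage hT Q
  obtain ⟨ν, hνprob, hνdom, hνlim⟩ := exists_measure_tendsto_ultrafilter hcont (hyperfilter ℕ)
    (cesaroAverage T Q) (isDominatedBy_cesaroAverage hT hVinv hQ)
  have herr (A : ℕ → Set Ω) :=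
    (tendsto_inv_succ_mul_measure Q A).mono_left Nat.hyperfilter_le_atTop
  refine ⟨ν, hνprob, hνdom, fun A hA => ?_, fun A hA hAinv => ?_⟩
  · have h := (hνlim _ (hT hA)).add (herr fun _ => A)
    simp only [cesaroAverage_preimage_add hT Q _ hA] at h
    simpa using tendsto_nhds_unique h ((hνlim A hA).add (herr fun n => T^[n + 1] ⁻¹' A))
  · refine tendsto_nhds_unique (hνlim A hA) ?_
    simp only [cesaroAverage_apply_of_preimage_eq hT Q _ hA hAinv, tendsto_const_nhds]

lemma IsDominatedBy.apply_eq_zero {V : Set Ω → ℝ≥0∞} {P : Measure Ω} (hP : IsDominatedBy P V)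
    {A : Set Ω} (hA : MeasurableSet A) (h : V A = 0) : P A = 0 :=
  nonpos_iff_eq_zero.1 (h ▸ hP A hA)

lemma measure_eq_sum_inter {ι : Type*} [Fintype ι] {P : Measure Ω} {B : ι → Set Ω}
    (hB : ∀ i, MeasurableSet (B i)) (hdisj : Pairwise (Function.onFun Disjoint B))
    (hcover : P (⋃ i, B i)ᶜ = 0) {A : Set Ω} (hA : MeasurableSet A) :
    P A = ∑ i, P (B i ∩ A) := by
  rw [← measure_inter_conull hcover, inter_comm, iUnion_inter,
    measure_iUnion (fun i j hij => (hdisj hij).mono inter_subset_left inter_subset_left)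
      fun i => (hB i).inter hA, tsum_fintype]

variable {V : OuterMeasure Ω}

structure IsErgodicAtom (T : Ω → Ω) (V : OuterMeasure Ω) (B : Set Ω) : Prop where
  measurableSet : MeasurableSet B
  preimage_eq : T ⁻¹' B = B
  apply_eq_one : V B = 1
  inter_null_or_sdiff_null : ∀ A, MeasurableSet A → T ⁻¹' A = A → V (B ∩ A) = 0 ∨ V (B \ A) = 0

def HasErgodicDecomposition (T : Ω → Ω) (V : OuterMeasure Ω) (C : Set Ω) : Prop :=
  ∃ s : Finset (Set Ω), (∀ B ∈ s, IsErgodicAtom T V B ∧ B ⊆ C) ∧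
    (s : Set (Set Ω)).PairwiseDisjoint id ∧ V (C \ ⋃₀ s) = 0

lemma IsErgodicAtom.hasErgodicDecomposition {B : Set Ω} (hB : IsErgodicAtom T V B) :
    HasErgodicDecomposition T V B :=
  ⟨{B}, by simp [hB], by simp, by simp⟩

lemma hasErgodicDecomposition_of_null {C : Set Ω} (hC : V C = 0) :
    HasErgodicDecomposition T V C :=
  ⟨∅, by simp, by simp, by simpa using hC⟩

lemma HasErgodicDecomposition.union {C₁ C₂ : Set Ω} (h₁ : HasErgodicDecomposition T V C₁)
    (h₂ : HasErgodicDecomposition T V C₂) (hC : Disjoint C₁ C₂) :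
    HasErgodicDecomposition T V (C₁ ∪ C₂) := by
  obtain ⟨s₁, hs₁, hd₁, hr₁⟩ := h₁
  obtain ⟨s₂, hs₂, hd₂, hr₂⟩ := h₂
  refine ⟨s₁ ∪ s₂, ?_, ?_, ?_⟩
  · simp only [Finset.mem_union]
    rintro B (hB | hB)
    · exact ⟨(hs₁ B hB).1, (hs₁ B hB).2.trans subset_union_left⟩
    · exact ⟨(hs₂ B hB).1, (hs₂ B hB).2.trans subset_union_right⟩
  · rw [Finset.coe_union, pairwiseDisjoint_union]
    exact ⟨hd₁, hd₂, fun B₁ hB₁ B₂ hB₂ _ => hC.mono (hs₁ B₁ hB₁).2 (hs₂ B₂ hB₂).2⟩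
  · refine measure_mono_null ?_ (measure_union_null hr₁ hr₂)
    rw [Finset.coe_union, sUnion_union]
    intro x
    simp only [Set.mem_sdiff, mem_union, not_or]
    tauto

lemma exists_subset_not_hasErgodicDecomposition
    (hVerg : ∀ A, MeasurableSet A → T ⁻¹' A = A → V A = 0 ∨ V A = 1) {C : Set Ω}
    (hCm : MeasurableSet C) (hCinv : T ⁻¹' C = C) (hC : ¬ HasErgodicDecomposition T V C) :
    ∃ C' ⊆ C, MeasurableSet C' ∧ T ⁻¹' C' = C' ∧ ¬ HasErgodicDecomposition T V C' ∧
      V (C \ C') = 1 := by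
  have hC1 : V C = 1 :=
    (hVerg C hCm hCinv).resolve_left fun h => hC (hasErgodicDecomposition_of_null h)
  obtain ⟨A, hAm, hAinv, hCA, hCA'⟩ : ∃ A, MeasurableSet A ∧ T ⁻¹' A = A ∧
      V (C ∩ A) ≠ 0 ∧ V (C \ A) ≠ 0 := by
    by_contra! h
    exact hC (IsErgodicAtom.hasErgodicDecomposition
      ⟨hCm, hCinv, hC1, fun A hA hAinv => or_iff_not_imp_left.2 (h A hA hAinv)⟩)
  have hinv₁ : T ⁻¹' (C ∩ A) = C ∩ A := by rw [preimage_inter, hCinv, hAinv]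
  have hinv₂ : T ⁻¹' (C \ A) = C \ A := by rw [preimage_sdiff, hCinv, hAinv]
  have hV₁ := (hVerg _ (hCm.inter hAm) hinv₁).resolve_left hCA
  have hV₂ := (hVerg _ (hCm.diff hAm) hinv₂).resolve_left hCA'
  by_cases h₁ : HasErgodicDecomposition T V (C ∩ A)
  · refine ⟨C \ A, sdiff_subset, hCm.diff hAm, hinv₂, fun h₂ => hC ?_, by
      rwa [sdiff_sdiff_right_self]⟩
    simpa only [inter_union_sdiff] using h₁.union h₂ disjoint_sdiff_inter.symm
  · exact ⟨C ∩ A, inter_subset_left, hCm.inter hAm, hinv₁, h₁, by rwa [sdiff_self_inter]⟩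

lemma IsContinuousAtEmpty.tendsto_sdiff_succ (hcont : IsContinuousAtEmpty V) {C : ℕ → Set Ω}
    (hC : ∀ n, MeasurableSet (C n)) (hanti : Antitone C) :
    Tendsto (fun n => V (C n \ C (n + 1))) atTop (𝓝 0) := by
  have h := hcont (fun n => C n \ ⋂ k, C k) (fun n => (hC n).diff (.iInter hC))
    (fun m n hmn => sdiff_subset_sdiff_left (hanti hmn))
    (eq_empty_of_forall_notMem fun x hx =>
      (mem_iInter.1 hx 0).2 (mem_iInter.2 fun k => (mem_iInter.1 hx k).1))
  exact tendsto_of_tendsto_of_tendsto_of_le_of_le tendsto_const_nhds h (fun _ => zero_le)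
    fun n => measure_mono (sdiff_subset_sdiff_right (iInter_subset C (n + 1)))

/-- Splitting a set without a decomposition forever would produce infinitely many disjoint
invariant sets of upper probability one, against continuity of `V` at `∅`. -/
theorem hasErgodicDecomposition_univ
    (hVerg : ∀ A, MeasurableSet A → T ⁻¹' A = A → V A = 0 ∨ V A = 1)
    (hcont : IsContinuousAtEmpty V) : HasErgodicDecomposition T V univ := by
  by_contra huniv
  let S := {C : Set Ω | MeasurableSet C ∧ T ⁻¹' C = C ∧ ¬ HasErgodicDecomposition T V C}
  have hstep : ∀ C ∈ S, ∃ C' ∈ S, C' ⊆ C ∧ V (C \ C') = 1 := by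
    rintro C ⟨hCm, hCinv, hC⟩
    obtain ⟨C', hsub, hC'm, hC'inv, hC', hV⟩ :=
      exists_subset_not_hasErgodicDecomposition hVerg hCm hCinv hC
    exact ⟨C', ⟨hC'm, hC'inv, hC'⟩, hsub, hV⟩
  choose! F hFS hFsub hFV using hstep
  let C : ℕ → Set Ω := fun n => F^[n] univ
  have hCS (n : ℕ) : C n ∈ S :=
    Function.Iterate.rec (· ∈ S) ⟨.univ, preimage_univ, huniv⟩ hFS n
  have hCsucc (n : ℕ) : C (n + 1) = F (C n) := Function.iterate_succ_apply' F n univ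
  have hanti : Antitone C :=
    antitone_nat_of_succ_le fun n => (hCsucc n).symm ▸ hFsub _ (hCS n)
  have h := hcont.tendsto_sdiff_succ (fun n => (hCS n).1) hanti
  simp only [hCsucc, fun n => hFV _ (hCS n)] at h
  exact one_ne_zero (tendsto_nhds_unique tendsto_const_nhds h)

theorem exists_fin_ergodic_decomposition
    (hVerg : ∀ A, MeasurableSet A → T ⁻¹' A = A → V A = 0 ∨ V A = 1)
    (hcont : IsContinuousAtEmpty V) :
    ∃ (n : ℕ) (B : Fin n → Set Ω), (∀ k, IsErgodicAtom T V (B k)) ∧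
      Pairwise (Function.onFun Disjoint B) ∧ V (⋃ k, B k)ᶜ = 0 := by
  obtain ⟨s, hs, hdisj, hnull⟩ := hasErgodicDecomposition_univ hVerg hcont
  let e := s.equivFin.symm
  refine ⟨s.card, fun k => e k, fun k => (hs _ (e k).2).1, fun i j hij => ?_, ?_⟩
  · exact hdisj (e i).2 (e j).2 fun h => hij (e.injective (Subtype.ext h))
  · have hU : ⋃ k, (e k : Set Ω) = ⋃₀ s := by
      ext x
      simp only [mem_iUnion, mem_sUnion, Finset.mem_coe]
      exact ⟨fun ⟨k, hk⟩ => ⟨_, (e k).2, hk⟩,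
        fun ⟨B, hB, hx⟩ => ⟨e.symm ⟨B, hB⟩, by simpa using hx⟩⟩
    simpa only [hU, compl_eq_univ_sdiff] using hnull

lemma IsErgodicAtom.measure_inter_eq_zero_or_eq {B A : Set Ω} (hB : IsErgodicAtom T V B)
    (hA : MeasurableSet A) (hAinv : T ⁻¹' A = A) :
    (∀ P : Measure Ω, IsDominatedBy P V → P (B ∩ A) = 0) ∨
      ∀ P : Measure Ω, IsDominatedBy P V → P (B ∩ A) = P B := by
  refine (hB.inter_null_or_sdiff_null A hA hAinv).imp (fun h P hP => ?_) fun h P hP => ?_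
  · exact hP.apply_eq_zero (hB.measurableSet.inter hA) h
  · exact measure_inter_conull' (hP.apply_eq_zero (hB.measurableSet.diff hA) h)

lemma IsErgodicAtom.measure_inter_eq_self {B A : Set Ω} (hB : IsErgodicAtom T V B)
    {μ : Measure Ω} [IsProbabilityMeasure μ] (hμB : μ B = 1) : μ (B ∩ A) = μ A := by
  rw [inter_comm, measure_inter_conull ((prob_compl_eq_zero_iff hB.measurableSet).2 hμB)]

lemma IsErgodicAtom.measure_eq_zero_or_one {B A : Set Ω} (hB : IsErgodicAtom T V B)
    {μ : Measure Ω} [IsProbabilityMeasure μ] (hμ : IsDominatedBy μ V) (hμB : μ B = 1)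
    (hA : MeasurableSet A) (hAinv : T ⁻¹' A = A) : μ A = 0 ∨ μ A = 1 := by
  rw [← hB.measure_inter_eq_self hμB, ← hμB]
  exact (hB.measure_inter_eq_zero_or_eq hA hAinv).imp (· μ hμ) (· μ hμ)

lemma IsErgodicAtom.measure_inter_eq_mul {B A : Set Ω} (hB : IsErgodicAtom T V B)
    {P μ : Measure Ω} [IsProbabilityMeasure μ] (hP : IsDominatedBy P V) (hμ : IsDominatedBy μ V)
    (hμB : μ B = 1) (hA : MeasurableSet A) (hAinv : T ⁻¹' A = A) :
    P (B ∩ A) = P B * μ A := by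
  rw [← hB.measure_inter_eq_self hμB]
  rcases hB.measure_inter_eq_zero_or_eq hA hAinv with h | h
  · rw [h P hP, h μ hμ, mul_zero]
  · rw [h P hP, h μ hμ, hμB, mul_one]

theorem IsErgodicAtom.exists_mem_invariant {Θ : Set (Measure Ω)} {B : Set Ω}
    (hB : IsErgodicAtom T (upperProbability Θ) B) (hT : Measurable T) (hΘ : Θ.Nonempty)
    (hprob : ∀ P ∈ Θ, IsProbabilityMeasure P)
    (hmax : ∀ P : Measure Ω, IsProbabilityMeasure P → IsDominatedBy P (upperProbability Θ) → P ∈ Θ)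
    (hcont : IsContinuousAtEmpty (upperProbability Θ))
    (hVinv : ∀ A, MeasurableSet A → upperProbability Θ (T ⁻¹' A) = upperProbability Θ A) :
    ∃ μ ∈ Θ, (∀ A, MeasurableSet A → μ (T ⁻¹' A) = μ A) ∧ μ B = 1 := by
  obtain ⟨Q, hQΘ, hQB⟩ := exists_mem_apply_eq_upperProbability hΘ hprob hmax hcont hB.measurableSet
  have := hprob Q hQΘ
  obtain ⟨μ, hμprob, hμdom, hμinv, hμQ⟩ := exists_invariant_isDominatedBy hT hcont hVinv Q
    fun A _ => le_upperProbability hQΘ A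
  exact ⟨μ, hmax μ hμprob hμdom, hμinv,
    by rw [hμQ B hB.measurableSet hB.preimage_eq, hQB, hB.apply_eq_one]⟩

end UpperProbability

/-- If `V` is continuous, `T`-invariant and `T`-ergodic, then every
`P ∈ Θ` coincides on the invariant σ-algebra with a finite convex combination of
`T`-ergodic measures from `Θ*`. -/
theorem stmt_8 {Ω : Type*} [MeasurableSpace Ω] (T : Ω → Ω) (hT : Measurable T)
    (Θ : Set (Measure Ω)) (hΘne : Θ.Nonempty)
    (hprob : ∀ P ∈ Θ, IsProbabilityMeasure P)
    (V : Set Ω → ℝ≥0∞)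
    (hV : ∀ A : Set Ω, V A = ⨆ P ∈ Θ, P A)
    (hmax : ∀ P : Measure Ω, IsProbabilityMeasure P →
      (∀ A, MeasurableSet A → P A ≤ V A) → P ∈ Θ)
    (hcont : ∀ A : ℕ → Set Ω, (∀ n, MeasurableSet (A n)) → Antitone A →
      (⋂ n, A n) = ∅ → Tendsto (fun n => V (A n)) atTop (nhds 0))
    (hVinv : ∀ A : Set Ω, MeasurableSet A → V (T ⁻¹' A) = V A)
    (hVerg : ∀ A : Set Ω, MeasurableSet A → T ⁻¹' A = A → V A = 0 ∨ V A = 1) :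
    ∀ P ∈ Θ, ∃ (n : ℕ) (l : Fin n → ℝ≥0∞) (Ps : Fin n → Measure Ω),
      (∀ k, Ps k ∈ Θ ∧ (∀ A : Set Ω, MeasurableSet A → Ps k (T ⁻¹' A) = Ps k A) ∧
        (∀ A : Set Ω, MeasurableSet A → T ⁻¹' A = A → Ps k A = 0 ∨ Ps k A = 1)) ∧
      (∑ k, l k) = 1 ∧
      (∀ A : Set Ω, MeasurableSet A → T ⁻¹' A = A → P A = ∑ k, l k * Ps k A) := by
  intro P hP
  obtain rfl : V = upperProbability Θ :=
    funext fun A => (hV A).trans (upperProbability_apply Θ A).symm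
  have hdom {Q : Measure Ω} (hQ : Q ∈ Θ) : IsDominatedBy Q (upperProbability Θ) :=
    fun A _ => le_upperProbability hQ A
  obtain ⟨n, B, hB, hBdisj, hBnull⟩ := exists_fin_ergodic_decomposition hVerg hcont
  choose μ hμΘ hμinv hμB using fun k => (hB k).exists_mem_invariant hT hΘne hprob hmax hcont hVinv
  have := fun k => hprob _ (hμΘ k)
  have hPsum {A : Set Ω} (hA : MeasurableSet A) : P A = ∑ k, P (B k ∩ A) :=
    measure_eq_sum_inter (fun k => (hB k).measurableSet) hBdisj
      ((hdom hP).apply_eq_zero (.compl (.iUnion fun k => (hB k).measurableSet)) hBnull) hA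
  refine ⟨n, fun k => P (B k), μ, fun k => ⟨hμΘ k, hμinv k, fun A hA hAinv =>
    (hB k).measure_eq_zero_or_one (hdom (hμΘ k)) (hμB k) hA hAinv⟩, ?_, fun A hA hAinv => ?_⟩
  · have := hprob P hP
    simpa using (hPsum .univ).symm
  · rw [hPsum hA]
    exact Finset.sum_congr rfl fun k _ =>
      (hB k).measure_inter_eq_mul (hdom hP) (hdom (hμΘ k)) (hμB k) hA hAinv
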